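/- If a connected open set O ⊆ ℝ³ and a continuously differentiable vector field v : O → ℝ³ satisfy ε(v) = 0 on O, then there exist a, b ∈ ℝ³ such that v(x) = a + b × x for all x ∈ O. -/

import Mathlib

/-!
Let `B` be a nondegenerate bilinear form and suppose `B (Dv(x) h) h = 0` on a convex open set.
Differentiating `t ↦ B (v (x + t • (y - x))) (y - x)` gives `B (v y - v x) (y - x) = 0`;
differentiating this identity once more, now in `x` at `x₀`, and using the skewness of `Dv(x₀)`
gives `v y = v x₀ + Dv(x₀) (y - x₀)`. So `v` is affine on every ball without any second
derivatives, `Dv` is locally constant and hence constant on a connected set, and in `ℝ³` a map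
that is skew for the dot product is `h ↦ b ⨯₃ h`.
-/

open scoped Matrix
open Set Metric Filter Topology

section SkewFderiv

variable {E : Type*} [NormedAddCommGroup E] [NormedSpace ℝ E] (B : E →L[ℝ] E →L[ℝ] ℝ)

theorem apply_apply_eq_neg_swap {A : E →L[ℝ] E} (hA : ∀ h, B (A h) h = 0) (h k : E) :
    B (A h) k = -B (A k) h := by
  have := hA (h + k)
  simp only [map_add, add_apply, hA] at this
  linarith

variable {B} {U : Set E} {v : E → E}

theorem apply_sub_sub_eq_zero_of_skew_fderiv (hU : Convex ℝ U)
    (hv : ∀ x ∈ U, DifferentiableAt ℝ v x) (hskew : ∀ x ∈ U, ∀ h, B (fderiv ℝ v x h) h = 0)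
    {x y : E} (hx : x ∈ U) (hy : y ∈ U) :
    B (v y - v x) (y - x) = 0 := by
  set c := y - x
  have hderiv : ∀ t ∈ Icc (0 : ℝ) 1, HasDerivAt (fun t : ℝ => B (v (x + t • c)) c) 0 t := by
    intro t ht
    have hmem : x + t • c ∈ U := hU.add_smul_sub_mem hx hy ht
    have hline : HasDerivAt (fun t : ℝ => x + t • c) c t := by
      simpa using ((hasDerivAt_id t).smul_const c).const_add x
    have := (B.flip c).hasFDerivAt.comp_hasDerivAt t
      ((hv _ hmem).hasFDerivAt.comp_hasDerivAt t hline)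
    rwa [ContinuousLinearMap.flip_apply, hskew _ hmem c] at this
  have hconst := constant_of_has_deriv_right_zero
    (fun t ht => (hderiv t ht).continuousAt.continuousWithinAt)
    (fun t ht => (hderiv t (Ico_subset_Icc_self ht)).hasDerivWithinAt) 1 (by simp)
  simp only [one_smul, zero_smul, add_zero, c, add_sub_cancel] at hconst
  rw [map_sub B, sub_apply, hconst, sub_self]

theorem eq_add_fderiv_sub_of_skew_fderiv (hB : Function.Injective B) (hU : IsOpen U)
    (hU' : Convex ℝ U) (hv : DifferentiableOn ℝ v U)
    (hskew : ∀ x ∈ U, ∀ h, B (fderiv ℝ v x h) h = 0) {x y : E} (hx : x ∈ U) (hy : y ∈ U) :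
    v y = v x + fderiv ℝ v x (y - x) := by
  have hdiff : ∀ z ∈ U, DifferentiableAt ℝ v z := fun z hz =>
    hv.differentiableAt (hU.mem_nhds hz)
  have hzero : (fun z => B (v z - v y) (z - y)) =ᶠ[𝓝 x] fun _ => 0 :=
    eventually_of_mem (hU.mem_nhds hx) fun z hz =>
      apply_sub_sub_eq_zero_of_skew_fderiv hU' hdiff hskew hy hz
  have hL := B.hasFDerivAt_of_bilinear ((hdiff x hx).hasFDerivAt.sub_const (v y))
    ((hasFDerivAt_id x).sub_const y)
  have hL0 := hL.unique ((hasFDerivAt_const 0 x).congr_of_eventuallyEq hzero)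
  have hxy : v x - v y = fderiv ℝ v x (x - y) := hB <| ContinuousLinearMap.ext fun h => by
    have hLh : B (v x - v y) h + B (fderiv ℝ v x h) (x - y) = 0 := by
      simpa using congrArg (· h) hL0
    rw [apply_apply_eq_neg_swap B (hskew x hx)]
    linarith
  rw [← neg_sub x y, map_neg, ← hxy]
  abel

theorem fderiv_eventuallyEq_const_of_skew_fderiv (hB : Function.Injective B) (hU : IsOpen U)
    (hv : DifferentiableOn ℝ v U) (hskew : ∀ x ∈ U, ∀ h, B (fderiv ℝ v x h) h = 0)
    {x : E} (hx : x ∈ U) : fderiv ℝ v =ᶠ[𝓝 x] fun _ => fderiv ℝ v x := by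
  obtain ⟨r, hr, hball⟩ := Metric.isOpen_iff.1 hU x hx
  have hx' : x ∈ ball x r := mem_ball_self hr
  have haffine : ∀ y ∈ ball x r, v y = v x + fderiv ℝ v x (y - x) := fun y hy =>
    eq_add_fderiv_sub_of_skew_fderiv hB isOpen_ball (convex_ball x r) (hv.mono hball)
      (fun z hz => hskew z (hball hz)) hx' hy
  filter_upwards [isOpen_ball.mem_nhds hx'] with y hy
  have hvy : v =ᶠ[𝓝 y] fun z => v x + fderiv ℝ v x (z - x) :=
    eventually_of_mem (isOpen_ball.mem_nhds hy) haffine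
  rw [hvy.fderiv_eq]
  exact (((fderiv ℝ v x).hasFDerivAt.comp y ((hasFDerivAt_id y).sub_const x)).const_add _).fderiv

theorem exists_eq_add_of_skew_fderiv (hB : Function.Injective B) (hU : IsOpen U)
    (hU' : IsPreconnected U) (hv : DifferentiableOn ℝ v U)
    (hskew : ∀ x ∈ U, ∀ h, B (fderiv ℝ v x h) h = 0) :
    ∃ (A : E →L[ℝ] E) (c : E), (∀ h, B (A h) h = 0) ∧ ∀ x ∈ U, v x = c + A x := by
  obtain rfl | ⟨x₀, hx₀⟩ := U.eq_empty_or_nonempty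
  · exact ⟨0, 0, by simp, by simp⟩
  have hloc := fun x (hx : x ∈ U) => fderiv_eventuallyEq_const_of_skew_fderiv hB hU hv hskew hx
  have hconst : ∀ x ∈ U, fderiv ℝ v x = fderiv ℝ v x₀ := fun x hx =>
    hU.is_const_of_fderiv_eq_zero (𝕜 := ℝ) hU'
      (fun y hy =>
        ((differentiableAt_const _).congr_of_eventuallyEq (hloc y hy)).differentiableWithinAt)
      (fun y hy => by simp [(hloc y hy).fderiv_eq]) hx hx₀
  obtain ⟨c, hc⟩ := hU.exists_eq_add_of_fderiv_eq hU' hv (fderiv ℝ v x₀).differentiableOn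
    (fun x hx => by simp [hconst x hx])
  exact ⟨fderiv ℝ v x₀, c, hskew x₀ hx₀, fun x hx => (hc hx).trans (add_comm _ _)⟩

end SkewFderiv

section DotProduct

variable {ι : Type*} [Fintype ι]

/-- `ι → ℝ` carries the sup norm, so the Euclidean structure enters through this form rather
than through an inner product. -/
noncomputable def dotProductCLM (ι : Type*) [Fintype ι] : (ι → ℝ) →L[ℝ] (ι → ℝ) →L[ℝ] ℝ :=
  LinearMap.toContinuousLinearMap
    (LinearMap.toContinuousLinearMap.toLinearMap ∘ₗ dotProductBilin ℝ ℝ)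

@[simp]
theorem dotProductCLM_apply (u w : ι → ℝ) : dotProductCLM ι u w = u ⬝ᵥ w := rfl

theorem dotProductCLM_injective [DecidableEq ι] : Function.Injective (dotProductCLM ι) := by
  intro u w huw
  ext i
  simpa using congrArg (· (Pi.single i 1)) huw

theorem dotProduct_apply_self_eq_zero [DecidableEq ι] {A : (ι → ℝ) →L[ℝ] (ι → ℝ)}
    (hA : ∀ i j, A (Pi.single j 1) i + A (Pi.single i 1) j = 0) (h : ι → ℝ) :
    A h ⬝ᵥ h = 0 := by
  set M := LinearMap.toMatrix' (A : (ι → ℝ) →ₗ[ℝ] (ι → ℝ))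
  have hM : Mᵀ = -M := Matrix.ext fun i j => eq_neg_of_add_eq_zero_left (hA j i)
  have hAM : A h = M *ᵥ h := (LinearMap.toMatrix'_mulVec _ h).symm
  have : A h ⬝ᵥ h = -(A h ⬝ᵥ h) :=
    calc A h ⬝ᵥ h = Mᵀ *ᵥ h ⬝ᵥ h := by
          rw [Matrix.mulVec_transpose, ← Matrix.dotProduct_mulVec, dotProduct_comm, hAM]
      _ = -(A h ⬝ᵥ h) := by rw [hM, Matrix.neg_mulVec, neg_dotProduct, hAM]
  linarith

end DotProduct

theorem exists_crossProduct_eq_of_dotProduct_apply_self_eq_zero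
    {A : (Fin 3 → ℝ) →L[ℝ] (Fin 3 → ℝ)} (hA : ∀ h, A h ⬝ᵥ h = 0) :
    ∃ b : Fin 3 → ℝ, ∀ h, A h = b ⨯₃ h := by
  have hentry : ∀ i j, A (Pi.single j 1) i = -A (Pi.single i 1) j := fun i j => by
    simpa using apply_apply_eq_neg_swap (dotProductCLM _) hA (Pi.single j 1) (Pi.single i 1)
  refine ⟨![A (Pi.single 1 1) 2, A (Pi.single 2 1) 0, A (Pi.single 0 1) 1], fun h => ?_⟩
  have hsum : A h = ∑ j, h j • A (Pi.single j 1) := by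
    conv_lhs => rw [pi_eq_sum_univ' h]
    simp
  ext i
  fin_cases i <;> simp only [hsum, cross_apply, Finset.sum_apply, Fin.sum_univ_three,
    Pi.smul_apply, smul_eq_mul, Matrix.cons_val, Fin.zero_eta, Fin.mk_one, Fin.reduceFinMk]
  · linear_combination h 0 / 2 * hentry 0 0 + h 1 * hentry 0 1
  · linear_combination h 1 / 2 * hentry 1 1 + h 2 * hentry 1 2
  · linear_combination h 2 / 2 * hentry 2 2 + h 0 * hentry 2 0

/-- If a connected open set `O ⊆ ℝ³` and a `C¹` vector field `v : O → ℝ³` satisfy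
`ε(v) = 0` on `O`, then `v` is a rigid motion: `v x = a + b ×₃ x` on `O`. -/
theorem symGrad_zero_imp_rigid_motion (O : Set (Fin 3 → ℝ))
    (hO : IsOpen O) (hconn : IsConnected O)
    (v : (Fin 3 → ℝ) → (Fin 3 → ℝ))
    (hv : ∀ i, ContDiffOn ℝ 1 (fun y => v y i) O)
    (hsym : ∀ x ∈ O, ∀ i j : Fin 3,
      (fderiv ℝ (fun y => v y i) x (Pi.single j 1)
        + fderiv ℝ (fun y => v y j) x (Pi.single i 1)) / 2 = 0) :
    ∃ a b : Fin 3 → ℝ, ∀ x ∈ O, v x = a + b ⨯₃ x := by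
  have hdiff : DifferentiableOn ℝ v O :=
    differentiableOn_pi.2 fun i => (hv i).differentiableOn one_ne_zero
  have hskew : ∀ x ∈ O, ∀ h, dotProductCLM (Fin 3) (fderiv ℝ v x h) h = 0 := by
    intro x hx h
    have hvx := hdiff.differentiableAt (hO.mem_nhds hx)
    refine dotProduct_apply_self_eq_zero (fun i j => ?_) h
    simpa [fderiv_apply hvx] using hsym x hx i j
  obtain ⟨A, c, hA, hc⟩ :=
    exists_eq_add_of_skew_fderiv dotProductCLM_injective hO hconn.isPreconnected hdiff hskew
  obtain ⟨b, hb⟩ := exists_crossProduct_eq_of_dotProduct_apply_self_eq_zero (A := A) hA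
  exact ⟨c, b, fun x hx => by rw [hc x hx, hb]⟩
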